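/- Among all trees on n ≥ 2 vertices, the path P_n has the maximum Wiener index, namely (n-1)n(n+1)/6. -/

import Mathlib

/-!
Deleting a suitable vertex `w` from a finite connected graph keeps it connected (take a leaf of a
spanning tree, one avoiding any prescribed vertex) and can only lengthen the remaining distances.
Inducting on the number of vertices this way gives `∑ₓ d(v, x) ≤ n(n-1)/2` for every vertex `v`,
and then, splitting off the distances from `w`, `∑ᵤ ∑ₓ d(u, x) ≤ (n-1)n(n+1)/3` for every connected
graph, in particular for every tree. On `P_n` the distance is `|i - j|`, which attains this bound.
-/

open Finset

lemma Fintype.sum_eq_add_sum_compl_singleton {α M : Type*} [Fintype α] [DecidableEq α]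
    [AddCommMonoid M] (f : α → M) (a : α) : ∑ x, f x = f a + ∑ x : ({a}ᶜ : Set α), f x :=
  Fintype.sum_eq_add_sum_subtype_ne f a

lemma Fintype.card_compl_singleton {α : Type*} [Fintype α] [DecidableEq α] (a : α) :
    Fintype.card ({a}ᶜ : Set α) = Fintype.card α - 1 := by
  rw [Fintype.card_compl_set, Set.card_singleton]

namespace SimpleGraph

variable {V W : Type*} {G : SimpleGraph V}

lemma Reachable.dist_map_le {G' : SimpleGraph W} (f : G →g G') {u v : V} (h : G.Reachable u v) :
    G'.dist (f u) (f v) ≤ G.dist u v := by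
  obtain ⟨p, hp⟩ := h.exists_walk_length_eq_dist
  simpa [hp] using dist_le (p.map f)

lemma Connected.dist_le_induce_dist {s : Set V} (hs : (G.induce s).Connected) (u v : s) :
    G.dist u v ≤ (G.induce s).dist u v :=
  (hs u v).dist_map_le (Embedding.induce s).toHom

lemma Connected.dist_lt_card [Fintype V] (hG : G.Connected) (u v : V) :
    G.dist u v < Fintype.card V := by
  obtain ⟨p, hp, hl⟩ := hG.exists_path_of_dist u v
  exact hl ▸ hp.length_lt

lemma Connected.exists_ne_connected_induce_compl_singleton [Finite V] [Nontrivial V]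
    (hG : G.Connected) (x : V) : ∃ w ≠ x, (G.induce {w}ᶜ).Connected := by
  obtain ⟨T, hTG, hT⟩ := hG.exists_isTree_le
  have := Fintype.ofFinite V
  classical
  have hleaf : ∀ w, T.degree w = 1 → (G.induce {w}ᶜ).Connected := fun w hw =>
    (hT.connected.induce_compl_singleton_of_degree_eq_one hw).mono fun _ _ h => hTG h
  obtain ⟨u, v, huv, hu, hv⟩ := hT.exists_ne_and_degree_eq_one
  by_cases hux : u = x
  · exact ⟨v, fun hvx => huv (hux.trans hvx.symm), hleaf v hv⟩
  · exact ⟨u, hux, hleaf u hu⟩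

theorem Connected.two_mul_sum_dist_le [Fintype V] (hG : G.Connected) (v : V) :
    2 * ∑ u, G.dist v u ≤ Fintype.card V * (Fintype.card V - 1) := by
  induction hn : Fintype.card V using Nat.strong_induction_on generalizing V with | _ n ih
  rcases subsingleton_or_nontrivial V with hV | hV
  · simp [Subsingleton.elim _ v]
  classical
  obtain ⟨w, hwv, hw⟩ := hG.exists_ne_connected_induce_compl_singleton v
  have hcard : Fintype.card ({w}ᶜ : Set V) = n - 1 := by
    rw [Fintype.card_compl_singleton, hn]
  have hn2 : 2 ≤ n := hn ▸ Fintype.one_lt_card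
  have hrest := ih (n - 1) (by omega) hw ⟨v, hwv.symm⟩ hcard
  have hvw : G.dist v w ≤ n - 1 := by have := hG.dist_lt_card v w; omega
  have hsub : ∑ u : ({w}ᶜ : Set V), G.dist v u ≤ ∑ u, (G.induce {w}ᶜ).dist ⟨v, hwv.symm⟩ u :=
    sum_le_sum fun u _ => hw.dist_le_induce_dist ⟨v, hwv.symm⟩ u
  rw [Fintype.sum_eq_add_sum_compl_singleton _ w]
  obtain ⟨m, rfl⟩ : ∃ m, n = m + 2 := ⟨n - 2, by omega⟩
  simp only [Nat.add_sub_cancel, show m + 2 - 1 = m + 1 by omega] at hrest hvw ⊢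
  nlinarith

lemma sum_sum_dist_eq_two_mul_sum_dist_add [Fintype V] [DecidableEq V] (w : V) :
    ∑ u, ∑ x, G.dist u x =
      2 * ∑ x, G.dist w x + ∑ u : ({w}ᶜ : Set V), ∑ x : ({w}ᶜ : Set V), G.dist u x := by
  rw [Fintype.sum_eq_add_sum_compl_singleton _ w, Fintype.sum_eq_add_sum_compl_singleton _ w]
  simp_rw [Fintype.sum_eq_add_sum_compl_singleton (G.dist _) w]
  rw [sum_add_distrib, dist_self, zero_add]
  simp only [dist_comm (G := G) (v := w)]
  ring

theorem Connected.three_mul_sum_sum_dist_le [Fintype V] (hG : G.Connected) :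
    3 * ∑ u, ∑ v, G.dist u v ≤ (Fintype.card V - 1) * Fintype.card V * (Fintype.card V + 1) := by
  induction hn : Fintype.card V using Nat.strong_induction_on generalizing V with | _ n ih
  rcases subsingleton_or_nontrivial V with hV | hV
  · have h0 (u v : V) : G.dist u v = 0 := by rw [Subsingleton.elim u v, dist_self]
    simp [h0]
  classical
  obtain ⟨w, -, hw⟩ := hG.exists_ne_connected_induce_compl_singleton hG.nonempty.some
  have hcard : Fintype.card ({w}ᶜ : Set V) = n - 1 := by
    rw [Fintype.card_compl_singleton, hn]
  have hn2 : 2 ≤ n := hn ▸ Fintype.one_lt_card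
  have hrest := ih (n - 1) (by omega) hw hcard
  have hw' := hn ▸ hG.two_mul_sum_dist_le w
  have hsub : ∑ u : ({w}ᶜ : Set V), ∑ x : ({w}ᶜ : Set V), G.dist u x ≤
      ∑ u, ∑ x, (G.induce {w}ᶜ).dist u x :=
    sum_le_sum fun u _ => sum_le_sum fun x _ => hw.dist_le_induce_dist u x
  rw [sum_sum_dist_eq_two_mul_sum_dist_add w]
  obtain ⟨m, rfl⟩ : ∃ m, n = m + 2 := ⟨n - 2, by omega⟩
  simp only [Nat.add_sub_cancel, show m + 2 - 1 = m + 1 by omega] at hrest hw' ⊢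
  nlinarith

end SimpleGraph

lemma Nat.two_mul_sum_range_dist (n : ℕ) : 2 * ∑ i ∈ range n, i.dist n = n * (n + 1) := by
  induction n with
  | zero => simp
  | succ n ih =>
    rw [sum_range_succ', Nat.dist_zero_left]
    simp only [Nat.dist_add_add_right]
    linarith

lemma Nat.three_mul_sum_range_sum_range_dist (n : ℕ) :
    3 * ∑ i ∈ range n, ∑ j ∈ range n, i.dist j = (n - 1) * n * (n + 1) := by
  induction n with
  | zero => simp
  | succ n ih =>
    have hrow := Nat.two_mul_sum_range_dist n
    simp only [sum_range_succ, sum_add_distrib, Nat.dist_self, add_zero, Nat.dist_comm n] at ih ⊢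
    rcases n with _ | n
    · simp
    · simp only [Nat.add_sub_cancel] at ih ⊢
      nlinarith

namespace SimpleGraph

lemma pathGraph_natDist_le_length {n : ℕ} {u v : Fin n} (p : (pathGraph n).Walk u v) :
    Nat.dist u v ≤ p.length := by
  induction p with
  | nil => simp
  | cons h p ih =>
    rw [pathGraph_adj] at h
    rw [Walk.length_cons]
    unfold Nat.dist at *
    omega

lemma pathGraph_dist_le {n : ℕ} {u v : Fin n} (k : ℕ) (h : v.val = u.val + k) :
    (pathGraph n).dist u v ≤ k := by
  induction k generalizing v with
  | zero => simp [Fin.ext h]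
  | succ k ih =>
    let w : Fin n := ⟨u + k, by omega⟩
    have hwv : (pathGraph n).Adj w v := pathGraph_adj.2 (.inl (by simp [w, h]; omega))
    calc (pathGraph n).dist u v ≤ (pathGraph n).dist u w + (pathGraph n).dist w v :=
          (pathGraph_preconnected n u w).dist_triangle_left v
      _ ≤ k + 1 := by rw [dist_eq_one_iff_adj.2 hwv]; exact Nat.add_le_add_right (ih rfl) 1

theorem pathGraph_dist {n : ℕ} (u v : Fin n) : (pathGraph n).dist u v = Nat.dist u v := by
  wlog huv : u ≤ v generalizing u v
  · rw [dist_comm, Nat.dist_comm]; exact this v u (le_of_not_ge huv)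
  apply le_antisymm
  · exact pathGraph_dist_le _ (by rw [Nat.dist_eq_sub_of_le huv]; omega)
  · obtain ⟨p, hp⟩ := (pathGraph_preconnected n u v).exists_walk_length_eq_dist
    exact hp ▸ pathGraph_natDist_le_length p

lemma pathGraph_isBridge {n : ℕ} {u v : Fin n} (h : u.val + 1 = v.val) :
    (pathGraph n).IsBridge s(u, v) := by
  rw [isBridge_iff]
  rintro ⟨p⟩
  suffices ∀ {a b}, ((pathGraph n).deleteEdges {s(u, v)}).Walk a b → a ≤ u → b ≤ u by
    have := this p le_rfl; omega
  intro a b q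
  induction q with
  | nil => exact id
  | @cons a c b hadj q ih =>
    intro ha
    apply ih
    rw [deleteEdges_adj, pathGraph_adj] at hadj
    by_contra hc
    obtain rfl : a = u := by ext; omega
    obtain rfl : c = v := by ext; omega
    exact hadj.2 rfl

theorem pathGraph_isAcyclic (n : ℕ) : (pathGraph n).IsAcyclic := by
  rw [isAcyclic_iff_forall_adj_isBridge]
  intro u v huv
  rcases pathGraph_adj.1 huv with h | h
  · exact pathGraph_isBridge h
  · exact Sym2.eq_swap ▸ pathGraph_isBridge h

theorem pathGraph_isTree {n : ℕ} (hn : n ≠ 0) : (pathGraph n).IsTree := by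
  obtain ⟨m, rfl⟩ := Nat.exists_eq_succ_of_ne_zero hn
  exact ⟨pathGraph_connected m, pathGraph_isAcyclic _⟩

lemma pathGraph_three_mul_sum_sum_dist (n : ℕ) :
    3 * ∑ u, ∑ v, (pathGraph n).dist u v = (n - 1) * n * (n + 1) := by
  simp only [pathGraph_dist]
  rw [← Nat.three_mul_sum_range_sum_range_dist, ← Fin.sum_univ_eq_sum_range]
  simp only [Fin.sum_univ_eq_sum_range (Nat.dist _)]

end SimpleGraph

/-- Among trees on `n ≥ 2` vertices, the path `P_n` has maximum Wiener index,
namely `(n-1)n(n+1)/6` (sums over ordered pairs equal twice the Wiener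
index). -/
theorem path_max_wiener (n : ℕ) (hn : 2 ≤ n) :
    (SimpleGraph.pathGraph n).IsTree ∧
      ((∑ u : Fin n, ∑ v : Fin n, (SimpleGraph.pathGraph n).dist u v : ℕ) : ℚ) / 2 =
        ((n : ℚ) - 1) * n * (n + 1) / 6 ∧
      ∀ T : SimpleGraph (Fin n), T.IsTree →
        ((∑ u : Fin n, ∑ v : Fin n, T.dist u v : ℕ) : ℚ) / 2 ≤
          ((n : ℚ) - 1) * n * (n + 1) / 6 := by
  have hcast : ((n - 1 : ℕ) : ℚ) = n - 1 := by rw [Nat.cast_sub (by omega), Nat.cast_one]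
  refine ⟨SimpleGraph.pathGraph_isTree (by omega), ?_, fun T hT => ?_⟩
  · have h := congrArg (Nat.cast : ℕ → ℚ) (SimpleGraph.pathGraph_three_mul_sum_sum_dist n)
    push_cast [hcast] at h ⊢
    linarith
  · have h := hT.connected.three_mul_sum_sum_dist_le
    rw [Fintype.card_fin] at h
    have h' := (Nat.cast_le (α := ℚ)).2 h
    push_cast [hcast] at h' ⊢
    linarith
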